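/- Let φ be a finite potent endomorphism of a k-vector space V and let V = V₁ ⊕ V₂ be a direct sum decomposition with φ(Vᵢ) ⊆ Vᵢ for i = 1,2. Let W₁ ⊆ V₁ and W₂ ⊆ V₂ be finite-dimensional subspaces with φ(Wᵢ) ⊆ Wᵢ and φ^{nᵢ}(Vᵢ) ⊆ Wᵢ for some nᵢ ≥ 1. Then W₁ + W₂ is an admissible subspace for φ on V and det((1+φ)|_{W₁+W₂}) = det((1+φ)|_{W₁}) · det((1+φ)|_{W₂}); that is, Det^k_V(1+φ) = Det^k_{V₁}(1+φ|_{V₁}) · Det^k_{V₂}(1+φ|_{V₂}). -/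

import Mathlib

/-!
Since `W₁ ⊓ W₂ = 0`, the sum `W₁ + W₂` is the internal direct sum `W₁ × W₂`, on which `1 + φ`
acts blockwise, so its determinant is the product of the two block determinants. Admissibility:
for `m ≥ n₁, n₂` the power `φ ^ (m - nᵢ)` preserves `Vᵢ`, so `φ ^ m` maps `V = V₁ + V₂`
into `W₁ + W₂`.
-/

namespace Submodule

variable {R M : Type*} [Ring R] [AddCommGroup M] [Module R M]

noncomputable def prodEquivSupOfDisjoint {p q : Submodule R M} (h : Disjoint p q) :
    (p × q) ≃ₗ[R] ↥(p ⊔ q) :=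
  (LinearEquiv.ofInjective (p.subtype.coprod q.subtype) <| by
      rw [← LinearMap.ker_eq_bot, LinearMap.ker_coprod_of_disjoint_range, ker_subtype,
        ker_subtype, prod_bot]
      rwa [range_subtype, range_subtype]).trans
    (LinearEquiv.ofEq _ _ (sup_eq_range p q).symm)

@[simp]
theorem coe_prodEquivSupOfDisjoint_apply {p q : Submodule R M} (h : Disjoint p q) (x : p × q) :
    (prodEquivSupOfDisjoint h x : M) = x.1 + x.2 :=
  rfl

end Submodule

section

variable {R M : Type*} [Semiring R] [AddCommMonoid M] [Module R M]

theorem Submodule.map_pow_le_of_le {f : Module.End R M} {p q : Submodule R M}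
    (hp : ∀ x ∈ p, f x ∈ p) {n m : ℕ} (hnm : n ≤ m) (h : p.map (f ^ n) ≤ q) :
    p.map (f ^ m) ≤ q := by
  have hp_pow : p.map (f ^ (m - n)) ≤ p :=
    Submodule.map_le_iff_le_comap.mpr fun x hx => Module.End.pow_apply_mem_of_forall_mem _ hp x hx
  calc p.map (f ^ m) = (p.map (f ^ (m - n))).map (f ^ n) := by
        rw [← Submodule.map_comp, ← Module.End.mul_eq_comp, ← pow_add, Nat.add_sub_cancel' hnm]
    _ ≤ p.map (f ^ n) := Submodule.map_mono hp_pow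
    _ ≤ q := h

theorem LinearMap.range_pow_le_sup_of_sup_eq_top {f : Module.End R M}
    {V₁ V₂ W₁ W₂ : Submodule R M}
    (hsum : V₁ ⊔ V₂ = ⊤) (hV₁ : ∀ x ∈ V₁, f x ∈ V₁) (hV₂ : ∀ x ∈ V₂, f x ∈ V₂)
    {n₁ n₂ m : ℕ} (h₁ : n₁ ≤ m) (h₂ : n₂ ≤ m)
    (hr₁ : V₁.map (f ^ n₁) ≤ W₁) (hr₂ : V₂.map (f ^ n₂) ≤ W₂) :
    LinearMap.range (f ^ m) ≤ W₁ ⊔ W₂ := by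
  rw [LinearMap.range_eq_map, ← hsum, Submodule.map_sup]
  exact sup_le_sup (Submodule.map_pow_le_of_le hV₁ h₁ hr₁) (Submodule.map_pow_le_of_le hV₂ h₂ hr₂)

end

theorem LinearMap.det_restrict_sup_of_disjoint {k V : Type*} [Field k] [AddCommGroup V]
    [Module k V] {f : Module.End k V} {p q : Submodule k V} [FiniteDimensional k p]
    [FiniteDimensional k q] (h : Disjoint p q) (hp : ∀ x ∈ p, f x ∈ p) (hq : ∀ x ∈ q, f x ∈ q)
    (hpq : ∀ x ∈ p ⊔ q, f x ∈ p ⊔ q) :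
    LinearMap.det (f.restrict hpq) =
      LinearMap.det (f.restrict hp) * LinearMap.det (f.restrict hq) := by
  let e := Submodule.prodEquivSupOfDisjoint h
  have hconj : f.restrict hpq =
      (e : p × q →ₗ[k] ↥(p ⊔ q)) ∘ₗ (f.restrict hp).prodMap (f.restrict hq) ∘ₗ
        (e.symm : ↥(p ⊔ q) →ₗ[k] p × q) := by
    ext x
    obtain ⟨y, rfl⟩ := e.surjective x
    simp [e]
  rw [hconj, LinearMap.det_conj, LinearMap.det_prodMap]

theorem det_one_add_of_invariant_direct_sum
    {k V : Type*} [Field k] [AddCommGroup V] [Module k V]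
    (φ : V →ₗ[k] V)
    (V₁ V₂ : Submodule k V) (hdisj : V₁ ⊓ V₂ = ⊥) (hsum : V₁ ⊔ V₂ = ⊤)
    (hV₁inv : ∀ x ∈ V₁, φ x ∈ V₁) (hV₂inv : ∀ x ∈ V₂, φ x ∈ V₂)
    (W₁ W₂ : Submodule k V) (hW₁le : W₁ ≤ V₁) (hW₂le : W₂ ≤ V₂)
    (hW₁fin : FiniteDimensional k W₁) (hW₂fin : FiniteDimensional k W₂)
    (hW₁inv : ∀ x ∈ W₁, φ x ∈ W₁) (hW₂inv : ∀ x ∈ W₂, φ x ∈ W₂)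
    (n₁ n₂ : ℕ)
    (hr₁ : Submodule.map (φ ^ n₁) V₁ ≤ W₁) (hr₂ : Submodule.map (φ ^ n₂) V₂ ≤ W₂) :
    FiniteDimensional k ↥(W₁ ⊔ W₂) ∧
    ∃ hinv : ∀ x ∈ W₁ ⊔ W₂, φ x ∈ W₁ ⊔ W₂,
      (∃ n : ℕ, 1 ≤ n ∧ LinearMap.range (φ ^ n) ≤ W₁ ⊔ W₂) ∧
      LinearMap.det ((1 + φ).restrict
          (fun x hx => (W₁ ⊔ W₂).add_mem hx (hinv x hx) :
            ∀ x ∈ W₁ ⊔ W₂, (1 + φ) x ∈ W₁ ⊔ W₂))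
        = LinearMap.det ((1 + φ).restrict
            (fun x hx => W₁.add_mem hx (hW₁inv x hx) : ∀ x ∈ W₁, (1 + φ) x ∈ W₁))
          * LinearMap.det ((1 + φ).restrict
            (fun x hx => W₂.add_mem hx (hW₂inv x hx) : ∀ x ∈ W₂, (1 + φ) x ∈ W₂)) := by
  have hdisjW : Disjoint W₁ W₂ := (disjoint_iff.mpr hdisj).mono hW₁le hW₂le
  refine ⟨Submodule.finiteDimensional_sup W₁ W₂, Module.End.invtSubmodule.sup_mem hW₁inv hW₂inv,
    ⟨n₁ + n₂ + 1, by omega, LinearMap.range_pow_le_sup_of_sup_eq_top hsum hV₁inv hV₂inv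
      (by omega) (by omega) hr₁ hr₂⟩, ?_⟩
  exact LinearMap.det_restrict_sup_of_disjoint hdisjW _ _ _
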